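/- arXiv:2006.14948 — 8 statements merged into one kernel-verified Lean document; each statement's English description precedes it below -/
import Mathlib

section
/- Let f = a_0 + a_1X + ⋯ + a_nX^n be an element of T = A + XB[X] (so a_0 ∈ A and a_1, …, a_n ∈ B). Then f is a unit of the ring T if and only if a_0 is a unit of A (i.e., a_0 has a multiplicative inverse lying in A) and a_1, a_2, …, a_n are nilpotent elements of B. -/
/-!
A unit of `T = A + X B[X]` is a unit of `B[X]` whose inverse again lies in `T`. The units of
`B[X]` are the polynomials with a unit constant term and nilpotent higher coefficients, and the
constant term of the inverse is the inverse of `a_0`, so it lies in `A` exactly when `a_0` is a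
unit of `A`.
-/

/-- The composite `T = A + X B[X]`: the subring of the polynomial ring `B[X]`
consisting of all polynomials whose constant coefficient lies in the subring `A`. -/
def polynomialComposite (B : Type*) [CommRing B] (A : Subring B) :
    Subring (Polynomial B) where
  carrier := {f | f.coeff 0 ∈ A}
  zero_mem' := by simpa using zero_mem A
  one_mem' := by simpa using one_mem A
  add_mem' := fun hf hg => by
    simpa [Polynomial.coeff_add] using add_mem hf hg
  neg_mem' := fun hf => by
    simpa [Polynomial.coeff_neg] using neg_mem (s := A) hf
  mul_mem' := fun hf hg => by
    simpa [Polynomial.mul_coeff_zero] using mul_mem hf hg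

open Polynomial

theorem SubmonoidClass.isUnit_mk_iff_exists_mul_eq_one {M σ : Type*} [CommMonoid M]
    [SetLike σ M] [SubmonoidClass σ M] {S : σ} {x : M} (hx : x ∈ S) :
    IsUnit (⟨x, hx⟩ : S) ↔ ∃ y ∈ S, x * y = 1 := by
  simp only [isUnit_iff_exists_inv, Subtype.exists, Subtype.ext_iff, MulMemClass.mk_mul_mk,
    OneMemClass.coe_one, exists_prop]

theorem Polynomial.coeff_zero_mul_coeff_zero_eq_one {R : Type*} [Semiring R] {f g : R[X]}
    (h : f * g = 1) : f.coeff 0 * g.coeff 0 = 1 := by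
  rw [← mul_coeff_zero, h, coeff_one_zero]

/-- Let `f = a_0 + a_1 X + ⋯ + a_n X^n` be an element of `T = A + X B[X]`
(so `a_0 ∈ A` and the other coefficients are in `B`).  Then `f` is a unit of the ring `T`
if and only if `a_0` is a unit of the ring `A` (i.e. its inverse lies in `A`) and all the
higher coefficients `a_1, …, a_n` are nilpotent elements of `B`. -/
theorem isUnit_polynomialComposite_iff (B : Type*) [CommRing B] (A : Subring B)
    (f : Polynomial B) (hf : f ∈ polynomialComposite B A) :
    IsUnit (⟨f, hf⟩ : polynomialComposite B A) ↔
      IsUnit (⟨f.coeff 0, hf⟩ : A) ∧ ∀ i : ℕ, i ≠ 0 → IsNilpotent (f.coeff i) := by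
  rw [SubmonoidClass.isUnit_mk_iff_exists_mul_eq_one,
    SubmonoidClass.isUnit_mk_iff_exists_mul_eq_one (S := A) (x := f.coeff 0) hf]
  constructor
  · rintro ⟨g, hgT, hfg⟩
    exact ⟨⟨g.coeff 0, hgT, coeff_zero_mul_coeff_zero_eq_one hfg⟩,
      (isUnit_iff_coeff_isUnit_isNilpotent.mp (.of_mul_eq_one g hfg)).2⟩
  · rintro ⟨⟨b, hbA, hb⟩, hnil⟩
    obtain ⟨g, hfg⟩ := isUnit_iff_exists_inv.mp <|
      isUnit_of_coeff_isUnit_isNilpotent (.of_mul_eq_one b hb) hnil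
    have hgb : g.coeff 0 = b :=
      left_inv_eq_right_inv ((mul_comm _ _).trans (coeff_zero_mul_coeff_zero_eq_one hfg)) hb
    exact ⟨g, show g.coeff 0 ∈ A from hgb ▸ hbA, hfg⟩
end

section
/- Let n ≥ 1, let A_0 ⊆ A_1 ⊆ ⋯ ⊆ A_{n-1} ⊆ B be subrings of a commutative ring B with unity, and let f = a_0 + a_1X + ⋯ + a_mX^m ∈ T_n (so a_i ∈ A_i for i < n and a_j ∈ B for j ≥ n). Then: (i) f is a unit of the ring T_n if and only if a_0 is a unit of A_0 (its inverse lies in A_0) and a_1, …, a_m are nilpotent in B; (ii) f is nilpotent if and only if a_0, a_1, …, a_m are all nilpotent in B. -/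
/-- The composite `T_n = A_0 + A_1 X + ⋯ + A_{n-1} X^{n-1} + X^n B[X]` for a chain of
subrings `A 0 ⊆ A 1 ⊆ ⋯ ⊆ A (n-1) ⊆ B`: the subring of `B[X]` of polynomials whose
`i`-th coefficient lies in `A i` for all `i < n`. -/
def polynomialCompositeN (B : Type*) [CommRing B] (n : ℕ) (A : ℕ → Subring B)
    (hA : ∀ i j, i ≤ j → j < n → A i ≤ A j) : Subring (Polynomial B) where
  carrier := {f | ∀ i, i < n → f.coeff i ∈ A i}
  zero_mem' := fun i _ => by simpa using zero_mem (A i)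
  one_mem' := fun i _ => by
    rw [Polynomial.coeff_one]
    split
    · exact one_mem (A i)
    · exact zero_mem (A i)
  add_mem' := fun hf hg i hi => by
    simpa [Polynomial.coeff_add] using add_mem (hf i hi) (hg i hi)
  neg_mem' := fun hf i hi => by
    simpa [Polynomial.coeff_neg] using neg_mem (s := A i) (hf i hi)
  mul_mem' := by
    intro f g hf hg k hk
    rw [Polynomial.coeff_mul]
    refine sum_mem ?_
    rintro ⟨i, j⟩ hij
    rw [Finset.HasAntidiagonal.mem_antidiagonal] at hij
    have hi : i ≤ k := by omega
    have hj : j ≤ k := by omega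
    exact mul_mem (hA i k hi hk (hf i (lt_of_le_of_lt hi hk)))
      (hA j k hj hk (hg j (lt_of_le_of_lt hj hk)))

/-!
Nilpotency is insensitive to passing to a subring, and a polynomial is nilpotent iff its
coefficients are. For units, the constant coefficient gives a ring map `T_n → A_0` with the
section `a ↦ C a`; so if `f ∈ T_n` is a unit, so is `f.coeff 0` in `A_0`, and its higher
coefficients are nilpotent because `f` is a unit of `B[X]`. Conversely, `f` is then the sum of
the unit `C (f.coeff 0)` of `T_n` and the nilpotent `f - C (f.coeff 0)`.
-/

open Polynomial

namespace polynomialCompositeN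

variable {B : Type*} [CommRing B] {n : ℕ} {A : ℕ → Subring B}
  {hA : ∀ i j, i ≤ j → j < n → A i ≤ A j}

theorem C_mem {a : B} (ha : a ∈ A 0) : C a ∈ polynomialCompositeN B n A hA := by
  intro i _
  rcases i with _ | i
  · simp [ha]
  · simp [zero_mem]

noncomputable def constant : A 0 →+* polynomialCompositeN B n A hA :=
  (Polynomial.C.comp (A 0).subtype).codRestrict _ fun a => C_mem a.2

@[simp]
theorem coe_constant (a : A 0) : (constant (hA := hA) a : B[X]) = C (a : B) := rfl

noncomputable def constantCoeff (hn : 0 < n) : polynomialCompositeN B n A hA →+* A 0 :=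
  (Polynomial.constantCoeff.comp (Subring.subtype _)).codRestrict _ fun g => g.2 0 hn

@[simp]
theorem coe_constantCoeff (hn : 0 < n) (g : polynomialCompositeN B n A hA) :
    (constantCoeff hn g : B) = (g : B[X]).coeff 0 := rfl

theorem isNilpotent_iff {g : polynomialCompositeN B n A hA} :
    IsNilpotent g ↔ ∀ i, IsNilpotent ((g : B[X]).coeff i) :=
  (IsNilpotent.map_iff (f := Subring.subtype _) Subtype.val_injective).symm.trans
    Polynomial.isNilpotent_iff

theorem isUnit_iff (hn : 0 < n) {g : polynomialCompositeN B n A hA} :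
    IsUnit g ↔ IsUnit (constantCoeff hn g) ∧ ∀ i ≠ 0, IsNilpotent ((g : B[X]).coeff i) := by
  refine ⟨fun hg => ⟨hg.map _, ?_⟩, fun ⟨hunit, hnil⟩ => ?_⟩
  · exact (isUnit_iff_coeff_isUnit_isNilpotent.mp (hg.map (Subring.subtype _))).2
  · have htail : IsNilpotent (g - constant (constantCoeff hn g)) := by
      refine isNilpotent_iff.mpr fun i => ?_
      rcases i with _ | i
      · simp
      · simpa using hnil (i + 1) i.succ_ne_zero
    simpa using htail.isUnit_add_left_of_commute (hunit.map constant) (Commute.all _ _)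

end polynomialCompositeN

/-- Let `n ≥ 1`, let `A 0 ⊆ A 1 ⊆ ⋯ ⊆ A (n-1) ⊆ B` be subrings of a
commutative ring `B` with unity, and let `f = a_0 + a_1 X + ⋯ + a_m X^m ∈ T_n`
(so `a_i ∈ A i` for `i < n`).  Then:
(i) `f` is a unit of the ring `T_n` iff `a_0` is a unit of `A 0` (its inverse lies in
`A 0`) and all higher coefficients `a_1, …, a_m` are nilpotent in `B`;
(ii) `f` is nilpotent iff all the coefficients `a_0, a_1, …, a_m` are nilpotent in `B`. -/
theorem isUnit_isNilpotent_polynomialCompositeN_iff (B : Type*) [CommRing B]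
    (n : ℕ) (hn : 1 ≤ n) (A : ℕ → Subring B) (hA : ∀ i j, i ≤ j → j < n → A i ≤ A j)
    (f : Polynomial B) (hf : f ∈ polynomialCompositeN B n A hA) :
    (IsUnit (⟨f, hf⟩ : polynomialCompositeN B n A hA) ↔
        IsUnit (⟨f.coeff 0, hf 0 hn⟩ : A 0) ∧
          ∀ i : ℕ, i ≠ 0 → IsNilpotent (f.coeff i)) ∧
      (IsNilpotent (⟨f, hf⟩ : polynomialCompositeN B n A hA) ↔
        ∀ i : ℕ, IsNilpotent (f.coeff i)) :=
  ⟨polynomialCompositeN.isUnit_iff hn, polynomialCompositeN.isNilpotent_iff⟩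
end

section
/- Let A ⊆ B be fields and let T = A + XB[X]. An element f ∈ T is irreducible in T if and only if either f = aX for some nonzero a ∈ B, or f = a(1 + Xg) for some nonzero a ∈ A and some g ∈ B[X] such that 1 + Xg is irreducible in the polynomial ring B[X]. -/
/-- The composite `T = A + X B[X]` for a subfield `A` of a field `B`: the subring
(an integral domain) of the polynomial ring `B[X]` consisting of all polynomials
whose constant coefficient lies in `A`. -/
def fieldComposite (B : Type*) [Field B] (A : Subfield B) :
    Subring (Polynomial B) where
  carrier := {f | f.coeff 0 ∈ A}
  zero_mem' := by simpa using zero_mem A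
  one_mem' := by simpa using one_mem A
  add_mem' := fun hf hg => by
    simpa [Polynomial.coeff_add] using add_mem hf hg
  neg_mem' := fun hf => by
    simpa [Polynomial.coeff_neg] using neg_mem (s := A) hf
  mul_mem' := fun hf hg => by
    simpa [Polynomial.mul_coeff_zero] using mul_mem hf hg

/-!
Irreducibility in `T = A + X B[X]` is the same as irreducibility in `B[X]`: the units of `T`
are the units of `B[X]` lying in `T`, and a factorisation `f = u v` in `B[X]` can be moved into
`T` by rescaling `u` and `v` by inverse constants, since `u(0) v(0) = f(0) ∈ A`. It remains to
sort the irreducibles of `B[X]` by their constant coefficient: with `f(0) = 0` they are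
associated to `X`, and with `f(0) = a ≠ 0` they are `a (1 + X g)` with `1 + X g` irreducible.
-/

open Polynomial

namespace Polynomial

variable {K : Type*} [Field K]

theorem eq_C_mul_X_of_irreducible_of_coeff_zero_eq_zero {p : K[X]} (hp : Irreducible p)
    (h0 : p.coeff 0 = 0) : ∃ a : K, a ≠ 0 ∧ p = C a * X := by
  obtain ⟨u, hu⟩ := irreducible_X.associated_of_dvd hp (X_dvd_iff.mpr h0)
  obtain ⟨a, ha, hau⟩ := Polynomial.isUnit_iff.mp u.isUnit
  exact ⟨a, ha.ne_zero, by rw [← hu, ← hau, mul_comm]⟩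

theorem exists_eq_C_mul_one_add_X_mul {p : K[X]} (h0 : p.coeff 0 ≠ 0) :
    ∃ g : K[X], p = C (p.coeff 0) * (1 + X * g) := by
  obtain ⟨g, hg⟩ := X_dvd_sub_C (p := p)
  refine ⟨C (p.coeff 0)⁻¹ * g, ?_⟩
  have hC : C (p.coeff 0) * C (p.coeff 0)⁻¹ = 1 := by rw [← C_mul, mul_inv_cancel₀ h0, C_1]
  linear_combination hg - X * g * hC

end Polynomial

section fieldComposite

variable {B : Type*} [Field B] {A : Subfield B}

theorem mem_fieldComposite {p : B[X]} : p ∈ fieldComposite B A ↔ p.coeff 0 ∈ A := Iff.rfl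

instance : IsLocalHom (fieldComposite B A).subtype where
  map_nonunit p hp := by
    obtain ⟨a, ha, hpa : C a = (p : B[X])⟩ := Polynomial.isUnit_iff.mp hp
    have haA : a ∈ A := by simpa [← hpa] using mem_fieldComposite.mp p.2
    have hinv : C a⁻¹ ∈ fieldComposite B A := by simpa [mem_fieldComposite] using A.inv_mem haA
    refine IsUnit.of_mul_eq_one (a := p) ⟨C a⁻¹, hinv⟩ (Subtype.ext ?_)
    rw [Subring.coe_mul, ← hpa, ← C_mul, mul_inv_cancel₀ ha.ne_zero, C_1, Subring.coe_one]

theorem exists_C_mul_mem_fieldComposite_of_mul_mem {u v : B[X]}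
    (h : u * v ∈ fieldComposite B A) :
    ∃ c : B, c ≠ 0 ∧ C c * u ∈ fieldComposite B A ∧ C c⁻¹ * v ∈ fieldComposite B A := by
  simp only [mem_fieldComposite, coeff_C_mul] at h ⊢
  rw [mul_coeff_zero] at h
  by_cases hu : u.coeff 0 = 0
  · by_cases hv : v.coeff 0 = 0
    · exact ⟨1, one_ne_zero, by simp [hu, zero_mem], by simp [hv, zero_mem]⟩
    · exact ⟨v.coeff 0, hv, by simp [hu, zero_mem], by simp [hv, one_mem]⟩
  · exact ⟨(u.coeff 0)⁻¹, inv_ne_zero hu, by simp [hu, one_mem], by rwa [inv_inv]⟩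

theorem irreducible_fieldComposite_iff_irreducible_coe {f : fieldComposite B A} :
    Irreducible f ↔ Irreducible (f : B[X]) := by
  refine ⟨fun hf => ⟨fun hu => hf.not_isUnit (hu.of_map (fieldComposite B A).subtype), ?_⟩,
    Irreducible.of_map (f := (fieldComposite B A).subtype)⟩
  intro u v huv
  obtain ⟨c, hc, hu, hv⟩ := exists_C_mul_mem_fieldComposite_of_mul_mem (huv ▸ f.2)
  have hfac : f = ⟨C c * u, hu⟩ * ⟨C c⁻¹ * v, hv⟩ := Subtype.ext <| by
    rw [Subring.coe_mul, huv, mul_mul_mul_comm, ← C_mul, mul_inv_cancel₀ hc, C_1, one_mul]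
  refine (hf.isUnit_or_isUnit hfac).imp (fun h => ?_) (fun h => ?_) <;>
    exact isUnit_of_mul_isUnit_right (h.map (fieldComposite B A).subtype)

end fieldComposite

/-- Let `A ⊆ B` be fields and let `T = A + X B[X]`.  An element `f ∈ T`
is irreducible in `T` if and only if either `f = a X` for some nonzero `a ∈ B`, or
`f = a (1 + X g)` for some nonzero `a ∈ A` and some `g ∈ B[X]` such that `1 + X g` is
irreducible in the polynomial ring `B[X]`. -/
theorem irreducible_fieldComposite_iff (B : Type*) [Field B] (A : Subfield B)
    (f : fieldComposite B A) :
    Irreducible f ↔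
      (∃ a : B, a ≠ 0 ∧ (f : Polynomial B) = Polynomial.C a * Polynomial.X) ∨
        (∃ a ∈ A, a ≠ 0 ∧ ∃ g : Polynomial B,
          (f : Polynomial B) = Polynomial.C a * (1 + Polynomial.X * g) ∧
            Irreducible (1 + Polynomial.X * g)) := by
  rw [irreducible_fieldComposite_iff_irreducible_coe]
  constructor
  · intro hf
    by_cases h0 : (f : B[X]).coeff 0 = 0
    · exact Or.inl (eq_C_mul_X_of_irreducible_of_coeff_zero_eq_zero hf h0)
    · obtain ⟨g, hg⟩ := exists_eq_C_mul_one_add_X_mul h0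
      refine Or.inr ⟨_, f.2, h0, g, hg, ?_⟩
      rwa [hg, irreducible_isUnit_mul (isUnit_C.mpr (Ne.isUnit h0))] at hf
  · rintro (⟨a, ha, hf⟩ | ⟨a, -, ha, g, hf, hg⟩) <;> rw [hf]
    · exact irreducible_of_degree_eq_one (degree_C_mul_X ha)
    · rwa [irreducible_isUnit_mul (isUnit_C.mpr (Ne.isUnit ha))]
end

section
/- Let A ⊆ B be fields and let T = A + XB[X]. Then every nonzero prime ideal of T is a maximal ideal of T. -/
namespace Subring

variable {R : Type*} [CommRing R] {S : Subring R} {x : S} (hx : ∀ r : R, (x : R) * r ∈ S)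

/-- For `x` in the conductor of `S` in `R`, the largest ideal `Q` of `R` with `x Q ⊆ P`. -/
def conductorColon (P : Ideal S) : Ideal R where
  carrier := {r | ∀ s : R, (⟨x * (s * r), hx _⟩ : S) ∈ P}
  zero_mem' s := by
    convert P.zero_mem
    simp
  add_mem' {a b} ha hb s := by
    convert P.add_mem (ha s) (hb s) using 1
    ext; simp [mul_add]
  smul_mem' c r hr s := by
    convert hr (s * c) using 3
    simp [mul_assoc]

variable {P : Ideal S} [hP : P.IsPrime]

theorem mul_mem_of_mem (hxP : x ∈ P) (r : R) : (⟨x * r, hx r⟩ : S) ∈ P := by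
  have hsq : (⟨x * r, hx r⟩ : S) ^ 2 = x * ⟨x * r ^ 2, hx _⟩ := by
    ext1; simp only [SubmonoidClass.coe_pow, MulMemClass.coe_mul]; ring
  exact hP.mem_of_pow_mem 2 (hsq ▸ P.mul_mem_right _ hxP)

theorem mem_conductorColon_iff (hxP : x ∉ P) (r : R) :
    r ∈ conductorColon hx P ↔ (⟨x * r, hx r⟩ : S) ∈ P := by
  refine ⟨fun h => by simpa using h 1, fun h s => ?_⟩
  have hprod : x * (⟨x * (s * r), hx _⟩ : S) = ⟨x * s, hx s⟩ * ⟨x * r, hx r⟩ := by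
    ext; simp only [MulMemClass.coe_mul]; ring
  exact (hP.mem_or_mem (hprod ▸ P.mul_mem_left _ h)).resolve_left hxP

theorem comap_conductorColon (hxP : x ∉ P) : (conductorColon hx P).comap S.subtype = P := by
  ext s
  rw [Ideal.mem_comap, mem_conductorColon_iff hx hxP]
  exact ⟨fun h => (hP.mem_or_mem h).resolve_left hxP, P.mul_mem_left x⟩

theorem conductorColon_isPrime (hxP : x ∉ P) : (conductorColon hx P).IsPrime := by
  refine ⟨fun htop => ?_, fun {a b} hab => ?_⟩
  · have hcomap := comap_conductorColon hx hxP
    rw [htop, Ideal.comap_top] at hcomap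
    exact hP.ne_top hcomap.symm
  simp only [mem_conductorColon_iff hx hxP] at hab ⊢
  have hprod : x * (⟨x * (a * b), hx _⟩ : S) = ⟨x * a, hx a⟩ * ⟨x * b, hx b⟩ := by
    ext; simp only [MulMemClass.coe_mul]; ring
  exact hP.mem_or_mem (hprod ▸ P.mul_mem_left _ hab)

theorem conductorColon_ne_bot (hxP : x ∉ P) (hP0 : P ≠ ⊥) : conductorColon hx P ≠ ⊥ := by
  intro hbot
  rw [← comap_conductorColon hx hxP, hbot, Ideal.comap_bot_of_injective _ S.subtype_injective]
    at hP0
  exact hP0 rfl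

theorem isMaximal_of_isMaximal_conductorColon (hxP : x ∉ P)
    [hQ : (conductorColon hx P).IsMaximal] : P.IsMaximal := by
  set Q := conductorColon hx P
  let f : S →+* R ⧸ Q := (Ideal.Quotient.mk Q).comp S.subtype
  have hxQ : Ideal.Quotient.mk Q x ≠ 0 := by
    rw [Ne, Ideal.Quotient.eq_zero_iff_mem]
    exact fun h => hxP (comap_conductorColon hx hxP ▸ h)
  obtain ⟨b, hb⟩ := Ideal.Quotient.exists_inv hxQ
  obtain ⟨y, rfl⟩ := Ideal.Quotient.mk_surjective b
  have hf : Function.Surjective f := by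
    rintro ⟨r⟩
    refine ⟨⟨x * (y * r), hx _⟩, ?_⟩
    simp only [f, RingHom.comp_apply, Subring.coe_subtype, ← mul_assoc, map_mul, hb, one_mul]
    rfl
  have hker : RingHom.ker f = P := by
    rw [← RingHom.comap_ker, Ideal.mk_ker, comap_conductorColon hx hxP]
  let _ := Ideal.Quotient.field Q
  exact hker ▸ RingHom.ker_isMaximal_of_surjective f hf

end Subring

open Polynomial

namespace fieldComposite

variable {B : Type*} [Field B] {A : Subfield B}

theorem mem_iff {f : B[X]} : f ∈ fieldComposite B A ↔ f.coeff 0 ∈ A := Iff.rfl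

noncomputable def X' : fieldComposite B A := ⟨X, by simp [mem_iff, A.zero_mem]⟩

theorem X'_mul_mem (g : B[X]) : ((X' : fieldComposite B A) : B[X]) * g ∈ fieldComposite B A := by
  simp [X', mem_iff, A.zero_mem]

noncomputable def constantCoeff : fieldComposite B A →+* A :=
  (Polynomial.constantCoeff.comp (fieldComposite B A).subtype).codRestrict A fun t => t.2

@[simp]
theorem coe_constantCoeff (t : fieldComposite B A) : (constantCoeff t : B) = (t : B[X]).coeff 0 :=
  rfl

theorem constantCoeff_surjective : Function.Surjective (constantCoeff (A := A)) :=
  fun a => ⟨⟨C a, by simp [mem_iff]⟩, Subtype.ext (by simp)⟩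

theorem ker_constantCoeff_isMaximal : (RingHom.ker (constantCoeff (A := A))).IsMaximal :=
  RingHom.ker_isMaximal_of_surjective _ constantCoeff_surjective

theorem ker_constantCoeff_le {P : Ideal (fieldComposite B A)} [hP : P.IsPrime] (hXP : X' ∈ P) :
    RingHom.ker constantCoeff ≤ P := by
  intro t ht
  obtain ⟨g, hg⟩ : X ∣ (t : B[X]) := X_dvd_iff.mpr (by simpa using congrArg Subtype.val ht)
  have ht : t = ⟨X * g, X'_mul_mem g⟩ := Subtype.ext hg
  exact ht ▸ Subring.mul_mem_of_mem X'_mul_mem hXP g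

end fieldComposite

open fieldComposite in
/-- Let `A ⊆ B` be fields and let `T = A + X B[X]`.  Then every nonzero
prime ideal of `T` is a maximal ideal of `T`. -/
theorem fieldComposite_prime_ideal_isMaximal (B : Type*) [Field B] (A : Subfield B)
    (P : Ideal (fieldComposite B A)) (hP0 : P ≠ ⊥) (hP : P.IsPrime) :
    P.IsMaximal := by
  by_cases hXP : X' ∈ P
  · rw [← ker_constantCoeff_isMaximal.eq_of_le hP.ne_top (ker_constantCoeff_le hXP)]
    exact ker_constantCoeff_isMaximal
  · have := (Subring.conductorColon_isPrime X'_mul_mem hXP).isMaximal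
      (Subring.conductorColon_ne_bot X'_mul_mem hXP hP0)
    exact Subring.isMaximal_of_isMaximal_conductorColon X'_mul_mem hXP
end

section
/- Let n ≥ 1 and let A_0 ⊆ A_1 ⊆ ⋯ ⊆ A_{n-1} ⊆ B be fields. Then every nonzero prime ideal of the composite T_n = A_0 + A_1X + ⋯ + A_{n-1}X^{n-1} + X^nB[X] is a maximal ideal of T_n. In particular, the ideal A_1X + A_2X^2 + ⋯ + A_{n-1}X^{n-1} + X^nB[X] = {f ∈ T_n : f has zero constant coefficient} is a maximal ideal of T_n, since the quotient of T_n by it is isomorphic to A_0. -/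
/-- The composite `T_n = A_0 + A_1 X + ⋯ + A_{n-1} X^{n-1} + X^n B[X]` for a chain of
subfields `A 0 ⊆ A 1 ⊆ ⋯ ⊆ A (n-1) ⊆ B` of a field `B`: the subring (an integral
domain) of `B[X]` of polynomials whose `i`-th coefficient lies in `A i` for all
`i < n`. -/
def fieldCompositeN (B : Type*) [Field B] (n : ℕ) (A : ℕ → Subfield B)
    (hA : ∀ i j, i ≤ j → j < n → A i ≤ A j) : Subring (Polynomial B) where
  carrier := {f | ∀ i, i < n → f.coeff i ∈ A i}
  zero_mem' := fun i _ => by simpa using zero_mem (A i)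
  one_mem' := fun i _ => by
    rw [Polynomial.coeff_one]
    split
    · exact one_mem (A i)
    · exact zero_mem (A i)
  add_mem' := fun hf hg i hi => by
    simpa [Polynomial.coeff_add] using add_mem (hf i hi) (hg i hi)
  neg_mem' := fun hf i hi => by
    simpa [Polynomial.coeff_neg] using neg_mem (s := A i) (hf i hi)
  mul_mem' := by
    intro f g hf hg k hk
    rw [Polynomial.coeff_mul]
    refine sum_mem ?_
    rintro ⟨i, j⟩ hij
    replace hij : i + j = k := by
      first
      | exact Finset.mem_antidiagonal.mp hij
      | simpa using hij
    have hi : i ≤ k := by omega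
    have hj : j ≤ k := by omega
    exact mul_mem (hA i k hi hk (hf i (lt_of_le_of_lt hi hk)))
      (hA j k hj hk (hg j (lt_of_le_of_lt hj hk)))

/-!
`X^n` lies in the conductor of `T_n ⊆ B[X]`. A prime `P` of `T_n` containing `X^n` contains
`X^n B[X]`, hence (being radical) every `f` with `f(0) = 0`, since `f^n ∈ X^n B[X]`; so `P` is
the kernel of `f ↦ f(0)`, which maps onto the field `A_0`. If `X^n ∉ P`, then
`Q = {g | X^n g ∈ P}` is a nonzero prime of the PID `B[X]`, hence maximal, with `Q ∩ T_n = P`;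
as `X^n` is invertible modulo `Q`, `T_n → B[X]/Q` is onto, so `T_n / P` is a field.
-/

open Polynomial

namespace Subring

variable {S : Type*} [CommRing S] {R : Subring S} {c : R} (hc : ∀ s, (c : S) * s ∈ R)

/-- Quantifying over `t` makes this an ideal for every `P`; for radical `P` it is
`{s | c s ∈ P}` (`mem_conductorLift_iff`). -/
def conductorLift (P : Ideal R) : Ideal S where
  carrier := {s | ∀ t, (⟨c * (t * s), hc (t * s)⟩ : R) ∈ P}
  zero_mem' t := by
    convert P.zero_mem
    simp
  add_mem' ha hb t := by
    convert P.add_mem (ha t) (hb t) using 1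
    ext
    simp [mul_add]
  smul_mem' u s hs t := by
    convert hs (t * u) using 3
    simp [mul_assoc]

variable {hc} {P : Ideal R}

lemma mem_conductorLift_iff (hP : P.IsRadical) {s : S} :
    s ∈ conductorLift hc P ↔ (⟨c * s, hc s⟩ : R) ∈ P := by
  refine ⟨fun h => by simpa using h 1, fun h t => hP ⟨2, ?_⟩⟩
  have hsq : (⟨c * (t * s), hc (t * s)⟩ : R) ^ 2 =
      ⟨c * s, hc s⟩ * ⟨c * (t ^ 2 * s), hc (t ^ 2 * s)⟩ := by
    ext
    simp only [SubmonoidClass.coe_pow, MulMemClass.coe_mul]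
    ring
  rw [hsq]
  exact P.mul_mem_right _ h

lemma conductor_mul_mem_of_mem (hP : P.IsRadical) (hcP : c ∈ P) (s : S) :
    (⟨c * s, hc s⟩ : R) ∈ P := by
  have hone : (1 : S) ∈ conductorLift hc P :=
    (mem_conductorLift_iff hP).2 (by simpa using hcP)
  have hs : s * 1 ∈ conductorLift hc P := Ideal.mul_mem_left _ s hone
  rw [mul_one] at hs
  exact (mem_conductorLift_iff hP).1 hs

lemma conductorLift_ne_bot (hP : P ≠ ⊥) : conductorLift hc P ≠ ⊥ := by
  obtain ⟨p, hpP, hp0⟩ := Submodule.exists_mem_ne_zero_of_ne_bot hP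
  refine (Submodule.ne_bot_iff _).2 ⟨p, fun t => ?_, fun h => hp0 (Subtype.ext h)⟩
  have hct : (⟨c * (t * p), hc (t * p)⟩ : R) = ⟨c * t, hc t⟩ * p := by
    ext
    simp [mul_assoc]
  rw [hct]
  exact P.mul_mem_left _ hpP

lemma coe_mem_conductorLift_iff [hP : P.IsPrime] (hcP : c ∉ P) (r : R) :
    (r : S) ∈ conductorLift hc P ↔ r ∈ P := by
  have hcr : (⟨c * r, hc r⟩ : R) = c * r := rfl
  rw [mem_conductorLift_iff hP.isRadical, hcr, hP.mul_mem_iff_mem_or_mem, or_iff_right hcP]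

lemma conductorLift_isPrime [hP : P.IsPrime] (hcP : c ∉ P) : (conductorLift hc P).IsPrime where
  ne_top' hQ :=
    hP.ne_top <| P.eq_top_iff_one.2 <| (coe_mem_conductorLift_iff (hc := hc) hcP 1).1 (by simp [hQ])
  mem_or_mem' {a b} hab := by
    simp only [mem_conductorLift_iff hP.isRadical] at hab ⊢
    refine hP.mem_or_mem ?_
    have hprod :
        (⟨c * a, hc a⟩ : R) * ⟨c * b, hc b⟩ = c * ⟨c * (a * b), hc (a * b)⟩ := by
      ext
      simp only [MulMemClass.coe_mul]
      ring
    rw [hprod]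
    exact P.mul_mem_left _ hab

lemma isMaximal_of_isMaximal_conductorLift [P.IsPrime] (hcP : c ∉ P)
    (hQ : (conductorLift hc P).IsMaximal) : P.IsMaximal := by
  set Q := conductorLift hc P
  have hker : RingHom.ker ((Ideal.Quotient.mk Q).comp R.subtype) = P := by
    ext r
    rw [RingHom.mem_ker, RingHom.comp_apply, Ideal.Quotient.eq_zero_iff_mem]
    exact coe_mem_conductorLift_iff hcP r
  have hsurj : Function.Surjective ((Ideal.Quotient.mk Q).comp R.subtype) := by
    intro q
    obtain ⟨s, rfl⟩ := Ideal.Quotient.mk_surjective q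
    obtain ⟨y, i, hi, hyc⟩ := hQ.exists_inv ((coe_mem_conductorLift_iff hcP c).not.2 hcP)
    refine ⟨⟨c * (y * s), hc (y * s)⟩, Ideal.Quotient.eq.2 ?_⟩
    have hdiff : (c : S) * (y * s) - s = -(i * s) := by
      linear_combination s * hyc
    rw [Subring.coe_subtype, hdiff]
    exact Q.neg_mem (Q.mul_mem_right s hi)
  let := Ideal.Quotient.field Q
  rw [← hker]
  exact RingHom.ker_isMaximal_of_surjective _ hsurj

end Subring

namespace fieldCompositeN

variable {B : Type*} [Field B] {n : ℕ} {A : ℕ → Subfield B}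
  {hA : ∀ i j, i ≤ j → j < n → A i ≤ A j}

lemma X_pow_mul_mem (g : B[X]) : X ^ n * g ∈ fieldCompositeN B n A hA := by
  intro i hi
  rw [mul_comm, coeff_mul_X_pow', if_neg (by omega)]
  exact zero_mem _

lemma X_pow_mem : (X ^ n : B[X]) ∈ fieldCompositeN B n A hA := by
  simpa using X_pow_mul_mem (hA := hA) 1

lemma C_mem {a : B} (ha : a ∈ A 0) : C a ∈ fieldCompositeN B n A hA := by
  intro i hi
  rw [coeff_C]
  split_ifs with h
  · exact hA 0 i (Nat.zero_le i) (h ▸ hi) ha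
  · exact zero_mem _

variable (hn : 0 < n)

noncomputable def constantCoeff : fieldCompositeN B n A hA →+* A 0 :=
  (Polynomial.constantCoeff.comp (fieldCompositeN B n A hA).subtype).codRestrict (A 0)
    fun f => f.2 0 hn

lemma mem_ker_constantCoeff {f : fieldCompositeN B n A hA} :
    f ∈ RingHom.ker (constantCoeff hn) ↔ (f : B[X]).coeff 0 = 0 := by
  rw [RingHom.mem_ker, ← Subtype.coe_inj]
  rfl

lemma isMaximal_ker_constantCoeff : (RingHom.ker (constantCoeff (hA := hA) hn)).IsMaximal :=
  RingHom.ker_isMaximal_of_surjective _ fun a =>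
    ⟨⟨C a, C_mem a.2⟩, Subtype.ext coeff_C_zero⟩

lemma ker_constantCoeff_le {P : Ideal (fieldCompositeN B n A hA)} [hP : P.IsPrime]
    (hXP : ⟨X ^ n, X_pow_mem⟩ ∈ P) : RingHom.ker (constantCoeff hn) ≤ P := by
  intro f hf
  obtain ⟨g, hg⟩ := X_dvd_iff.2 ((mem_ker_constantCoeff hn).1 hf)
  have hpow : f ^ n = ⟨X ^ n * g ^ n, X_pow_mul_mem _⟩ := by
    ext
    simp [hg, mul_pow]
  exact hP.mem_of_pow_mem n (hpow ▸ Subring.conductor_mul_mem_of_mem hP.isRadical hXP _)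

end fieldCompositeN

/-- Let `n ≥ 1` and let `A 0 ⊆ A 1 ⊆ ⋯ ⊆ A (n-1) ⊆ B` be fields.  Then
every nonzero prime ideal of the composite
`T_n = A_0 + A_1 X + ⋯ + A_{n-1} X^{n-1} + X^n B[X]` is a maximal ideal of `T_n`.
In particular the ideal `A_1 X + ⋯ + A_{n-1} X^{n-1} + X^n B[X]
 = {f ∈ T_n : f has zero constant coefficient}` is a maximal ideal of `T_n`. -/
theorem fieldCompositeN_prime_ideal_isMaximal (B : Type*) [Field B]
    (n : ℕ) (hn : 1 ≤ n) (A : ℕ → Subfield B)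
    (hA : ∀ i j, i ≤ j → j < n → A i ≤ A j) :
    (∀ P : Ideal (fieldCompositeN B n A hA), P ≠ ⊥ → P.IsPrime → P.IsMaximal) ∧
      ∀ I : Ideal (fieldCompositeN B n A hA),
        (∀ f : fieldCompositeN B n A hA, f ∈ I ↔ (f : Polynomial B).coeff 0 = 0) →
          I.IsMaximal := by
  have hker := fieldCompositeN.isMaximal_ker_constantCoeff (hA := hA) hn
  have hc : ∀ g : B[X],
      ((⟨X ^ n, fieldCompositeN.X_pow_mem⟩ : fieldCompositeN B n A hA) : B[X]) * g ∈
        fieldCompositeN B n A hA :=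
    fieldCompositeN.X_pow_mul_mem
  refine ⟨fun P hP0 hP => ?_, fun I hI => ?_⟩
  · by_cases hXP : ⟨X ^ n, fieldCompositeN.X_pow_mem⟩ ∈ P
    · rw [← hker.eq_of_le hP.ne_top (fieldCompositeN.ker_constantCoeff_le hn hXP)]
      exact hker
    · have := Subring.conductorLift_isPrime (hc := hc) hXP
      exact Subring.isMaximal_of_isMaximal_conductorLift hXP
        (IsPrime.to_maximal_ideal (Subring.conductorLift_ne_bot hP0))
  · convert hker
    ext f
    rw [hI, fieldCompositeN.mem_ker_constantCoeff]
end

section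
/- Let A ⊆ B be fields and let T = A + XB[X]. Then T is atomic: every nonzero nonunit element of T is a finite product of irreducible elements of T. -/
open Polynomial

theorem WfDvdMonoid.of_degree {α : Type*} [CommMonoidWithZero α] (d : α → ℕ)
    (degree_mul : ∀ {a b : α}, a ≠ 0 → b ≠ 0 → d (a * b) = d a + d b)
    (isUnit_of_degree_eq_zero : ∀ {a : α}, a ≠ 0 → d a = 0 → IsUnit a) : WfDvdMonoid α where
  wf := by
    classical
    refine Subrelation.wf (r := InvImage (· < ·) fun a => if a = 0 then ⊤ else (d a : ℕ∞))
      ?_ (InvImage.wf _ wellFounded_lt)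
    rintro a b ⟨ha, c, hc, rfl⟩
    by_cases hac : a * c = 0
    · simp [InvImage, ha, hac]
    have hc0 : c ≠ 0 := right_ne_zero_of_mul hac
    have hdc : d c ≠ 0 := fun h => hc (isUnit_of_degree_eq_zero hc0 h)
    simp only [InvImage, ha, hac, if_false, degree_mul ha hc0]
    exact_mod_cast Nat.lt_add_of_pos_right (Nat.pos_of_ne_zero hdc)

namespace fieldComposite

variable {B : Type*} [Field B] {A : Subfield B}

variable (B A) in
noncomputable def C : A →+* fieldComposite B A :=
  (Polynomial.C.comp A.subtype).codRestrict _ fun a => by simp [mem_iff]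

theorem isUnit_of_natDegree_eq_zero {f : fieldComposite B A} (hf : f ≠ 0)
    (hdeg : (f : B[X]).natDegree = 0) : IsUnit f := by
  obtain ⟨c, hc⟩ := natDegree_eq_zero.mp hdeg
  have hcA : c ∈ A := by simpa [← hc] using mem_iff.mp f.2
  obtain rfl : f = C B A ⟨c, hcA⟩ := Subtype.ext hc.symm
  exact (isUnit_iff_ne_zero.mpr fun h => hf (by rw [h, map_zero])).map _

instance : WfDvdMonoid (fieldComposite B A) :=
  .of_degree (fun f => (f : B[X]).natDegree)
    (fun ha hb => natDegree_mul (by simpa using ha) (by simpa using hb))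
    isUnit_of_natDegree_eq_zero

end fieldComposite

/-- Let `A ⊆ B` be fields and let `T = A + X B[X]`.  Then `T` is atomic:
every nonzero nonunit element of `T` is a finite product of irreducible elements
(atoms) of `T`. -/
theorem fieldComposite_atomic (B : Type*) [Field B] (A : Subfield B)
    (f : fieldComposite B A) (hf0 : f ≠ 0) (hfu : ¬ IsUnit f) :
    ∃ l : Multiset (fieldComposite B A),
      (∀ x ∈ l, Irreducible x) ∧ l.prod = f := by
  obtain ⟨l, hirr, hprod, -⟩ := (WfDvdMonoid.not_isUnit_iff_exists_factors_eq f hf0).mp hfu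
  exact ⟨l, hirr, hprod⟩
end

section
/- Let B be an integral domain containing prime elements p_1, p_2, …, p_{r-1} (r ≥ 2), and let M be a nontrivial additive submonoid of the nonnegative rationals ℚ≥0. Let m_1, m_2, …, m_r ∈ M with m_r < m_{r-1} < ⋯ < m_2 < m_1, such that m_1 is irreducible in M (i.e., m_1 ≠ 0 and whenever m_1 = a + b with a, b ∈ M then a = 0 or b = 0) and m_2, m_3, …, m_r ∉ m_1 + M. Then the element p_{r-1}X^{m_r} − ⋯ − p_2X^{m_3} − p_1X^{m_2} − X^{m_1} is irreducible in the monoid domain B[M]. -/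
/-!
Measure degrees in `B[M]` by the inclusion `M → ℚ≥0`. Since `B` is a domain, degrees add under
multiplication. The element in question has degree `m₁`, with leading coefficient `-1`, a unit.
In a factorisation, the degrees of the two factors are elements of `M` summing to `m₁`, so one of
them is `0` because `m₁` is an atom of `M`. That factor is a constant `c`, and comparing
coefficients of `X^{m₁}` shows that `c` divides `-1`.
-/

open scoped NNRat
open AddMonoidAlgebra

namespace AddMonoidAlgebra

variable {R A T : Type*}

theorem supDegree_single_le [Semiring R] [SemilatticeSup T] [OrderBot T] {D : A → T} (a : A)
    (r : R) : (single a r).supDegree D ≤ D a := by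
  classical
  rw [supDegree_single]
  split_ifs
  exacts [bot_le, le_rfl]

section

variable [AddCommMonoid A] [AddCommMonoid T] [LinearOrder T] [OrderBot T] {D : A →+ T}

theorem supDegree_mul_of_ne_zero [Semiring R] [NoZeroDivisors R] [AddLeftStrictMono T]
    (hD : Function.Injective D) {p q : R[A]} (hp : p ≠ 0) (hq : q ≠ 0) :
    (p * q).supDegree D = p.supDegree D + q.supDegree D :=
  supDegree_mul hD (map_add D)
    (mul_ne_zero ((leadingCoeff_ne_zero hD).mpr hp) ((leadingCoeff_ne_zero hD).mpr hq)) hp hq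

variable [CanonicallyOrderedAdd T]

theorem eq_single_zero_of_supDegree_eq_zero [Semiring R] (hD : Function.Injective D) {p : R[A]}
    (hp : p.supDegree D = 0) : p = single 0 (p.coeff 0) := by
  ext s
  obtain rfl | hs := eq_or_ne s 0
  · rw [coeff_single, Finsupp.single_eq_same]
  · rw [coeff_single, Finsupp.single_eq_of_ne hs]
    refine coeff_eq_zero_of_not_le_supDegree (D := D) fun hle => hs (hD ?_)
    rw [map_zero]
    exact nonpos_iff_eq_zero.mp (hle.trans_eq hp)

theorem isUnit_of_supDegree_eq_zero_of_isUnit_coeff_mul [CommSemiring R]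
    (hD : Function.Injective D) {p q : R[A]} {a : A} (hp : p.supDegree D = 0)
    (hpq : IsUnit ((p * q).coeff a)) :
    IsUnit p := by
  rw [eq_single_zero_of_supDegree_eq_zero hD hp, coeff_single_zero_mul] at hpq
  rw [eq_single_zero_of_supDegree_eq_zero hD hp]
  exact (isUnit_of_mul_isUnit_left hpq).map singleZeroRingHom

theorem irreducible_of_supDegree_eq_of_isUnit_coeff [CommSemiring R] [IsDomain R]
    [AddLeftStrictMono T] (hD : Function.Injective D) {f : R[A]} {a : A}
    (ha₀ : a ≠ 0) (ha : ∀ x y, a = x + y → x = 0 ∨ y = 0)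
    (hdeg : f.supDegree D = D a) (hcoeff : IsUnit (f.coeff a)) : Irreducible f := by
  have hf : f ≠ 0 := by
    rintro rfl
    exact not_isUnit_zero hcoeff
  refine ⟨fun ⟨u, hu⟩ => ha₀ (hD ?_), fun u v huv => ?_⟩
  · have hdeg_one : D a + supDegree D (↑u⁻¹ : R[A]) = 0 := by
      rw [← hdeg, ← hu, ← supDegree_mul_of_ne_zero hD u.ne_zero u⁻¹.ne_zero, Units.mul_inv,
        one_def, supDegree_single_ne_zero _ one_ne_zero, map_zero]
    rw [map_zero]
    exact (add_eq_zero.mp hdeg_one).1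
  have hu : u ≠ 0 := by rintro rfl; exact hf (by rw [huv, zero_mul])
  have hv : v ≠ 0 := by rintro rfl; exact hf (by rw [huv, mul_zero])
  obtain ⟨x, hx⟩ := supDegree_mem_range D hu
  obtain ⟨y, hy⟩ := supDegree_mem_range D hv
  have hxy : a = x + y := hD <| by
    rw [map_add, hx, hy, ← supDegree_mul_of_ne_zero hD hu hv, ← huv, hdeg]
  rw [huv] at hcoeff
  rcases ha x y hxy with rfl | rfl
  · rw [map_zero] at hx
    exact .inl <| isUnit_of_supDegree_eq_zero_of_isUnit_coeff_mul hD hx.symm hcoeff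
  · rw [map_zero] at hy
    rw [mul_comm] at hcoeff
    exact .inr <| isUnit_of_supDegree_eq_zero_of_isUnit_coeff_mul hD hy.symm hcoeff

theorem irreducible_add_single [CommSemiring R] [IsDomain R] [AddLeftStrictMono T]
    (hD : Function.Injective D) {g : R[A]} {a : A} {u : R}
    (ha₀ : a ≠ 0) (ha : ∀ x y, a = x + y → x = 0 ∨ y = 0) (hg : g.supDegree D < D a)
    (hu : IsUnit u) : Irreducible (g + single a u) := by
  have hdeg_single : (single a u).supDegree D = D a := supDegree_single_ne_zero a hu.ne_zero
  refine irreducible_of_supDegree_eq_of_isUnit_coeff hD ha₀ ha ?_ ?_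
  · rw [supDegree_add_eq_right (hdeg_single ▸ hg), hdeg_single]
  · rwa [coeff_add, Finsupp.add_apply, coeff_eq_zero_of_not_le_supDegree hg.not_ge, coeff_single,
      Finsupp.single_eq_same, zero_add]

end

end AddMonoidAlgebra

theorem irreducible_monoidAlgebra_element_general (B : Type*) [CommRing B] [IsDomain B]
    (r : ℕ) (hr : 2 ≤ r) (p : ℕ → B)
    (M : AddSubmonoid ℚ≥0) (m : ℕ → M)
    (hlt : ∀ i j, 1 ≤ i → i < j → j ≤ r → (m j : ℚ≥0) < (m i : ℚ≥0))
    (hirr : m 1 ≠ 0 ∧ ∀ a b : M, m 1 = a + b → a = 0 ∨ b = 0) :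
    Irreducible
      (AddMonoidAlgebra.single (m r) (p (r - 1))
          - (∑ i ∈ Finset.Icc 1 (r - 2), AddMonoidAlgebra.single (m (i + 1)) (p i))
          - AddMonoidAlgebra.single (m 1) (1 : B) :
        AddMonoidAlgebra B M) := by
  rw [sub_eq_add_neg, ← single_neg]
  refine irreducible_add_single (D := M.subtype) Subtype.val_injective hirr.1 hirr.2 ?_
    isUnit_one.neg
  have hmr_lt : (m r : ℚ≥0) < m 1 := hlt 1 r le_rfl (by omega) le_rfl
  refine supDegree_sub_le.trans_lt (sup_lt_iff.mpr ⟨?_, ?_⟩)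
  · exact (supDegree_single_le _ _).trans_lt hmr_lt
  · refine supDegree_sum_le.trans_lt ((Finset.sup_lt_iff (bot_le.trans_lt hmr_lt)).mpr ?_)
    intro i hi
    rw [Finset.mem_Icc] at hi
    exact (supDegree_single_le _ _).trans_lt (hlt 1 (i + 1) le_rfl (by omega) (by omega))

/-- Let `B` be an integral domain containing prime elements
`p 1, p 2, …, p (r-1)` (with `r ≥ 2`), and let `M` be a nontrivial additive submonoid
of the nonnegative rationals `ℚ≥0`.  Let `m 1, m 2, …, m r ∈ M` with
`m r < m (r-1) < ⋯ < m 2 < m 1`, such that `m 1` is irreducible in `M` (i.e. `m 1 ≠ 0`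
and whenever `m 1 = a + b` with `a, b ∈ M` then `a = 0` or `b = 0`) and
`m 2, m 3, …, m r ∉ m 1 + M`.  Then the element
`p_{r-1} X^{m_r} − p_{r-2} X^{m_{r-1}} − ⋯ − p_2 X^{m_3} − p_1 X^{m_2} − X^{m_1}`
is irreducible in the monoid domain `B[M]` (the monoid algebra of `M` over `B`). -/
theorem irreducible_monoidAlgebra_element (B : Type*) [CommRing B] [IsDomain B]
    (r : ℕ) (hr : 2 ≤ r) (p : ℕ → B) (hp : ∀ i, 1 ≤ i → i ≤ r - 1 → Prime (p i))
    (M : AddSubmonoid ℚ≥0) (hM : M ≠ ⊥) (m : ℕ → M)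
    (hlt : ∀ i j, 1 ≤ i → i < j → j ≤ r → (m j : ℚ≥0) < (m i : ℚ≥0))
    (hirr : m 1 ≠ 0 ∧ ∀ a b : M, m 1 = a + b → a = 0 ∨ b = 0)
    (hnot : ∀ i, 2 ≤ i → i ≤ r → ∀ t : M, m i ≠ m 1 + t) :
    Irreducible
      (AddMonoidAlgebra.single (m r) (p (r - 1))
          - (∑ i ∈ Finset.Icc 1 (r - 2), AddMonoidAlgebra.single (m (i + 1)) (p i))
          - AddMonoidAlgebra.single (m 1) (1 : B) :
        AddMonoidAlgebra B M) :=
  irreducible_monoidAlgebra_element_general B r hr p M m hlt hirr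
end

section
/- Let Z̄ denote the ring of all algebraic integers (the integral closure of ℤ in an algebraic closure of ℚ) and let R = ℤ + X·Z̄[X] be the subring of Z̄[X] of polynomials whose constant coefficient is a rational integer. Then R satisfies the ascending chain condition on principal ideals (ACCP): every ascending chain (f_1) ⊆ (f_2) ⊆ (f_3) ⊆ ⋯ of principal ideals of R stabilizes. -/
/-!
A strict divisibility `g = f * c` in `R = ℤ + X Z̄[X]` either lowers the degree (when `c` is not
constant) or has `c` a rational integer `k ≠ ±1`, and then the leading coefficient of `g` is `k`
times that of `f`. A nonzero algebraic integer `a` lies in the ring of integers of the number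
field `ℚ(a)`, where `n ∣ a` forces `|n| ≤ |N(a)|`; so the largest natural number dividing a
leading coefficient is finite, and it grows strictly along the second kind of step. Strict
divisibility in `R` is therefore well-founded, which is ACCP.
-/

set_option synthInstance.maxHeartbeats 1000000
set_option maxHeartbeats 2000000

/-- The ring `Z̄` of all algebraic integers: the integral closure of `ℤ` in an
algebraic closure of `ℚ`. -/
noncomputable abbrev algInt : Subalgebra ℤ (AlgebraicClosure ℚ) :=
  integralClosure ℤ (AlgebraicClosure ℚ)

/-- `R = ℤ + X ⬝ Z̄[X]`: the subring of the polynomial ring `Z̄[X]` consisting of all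
polynomials whose constant coefficient lies in the image of `ℤ`. -/
noncomputable abbrev intPlusXAlgIntX : Subring (Polynomial algInt) :=
  polynomialComposite algInt (Int.castRingHom algInt).range

open Polynomial

section

variable {B : Type*} [CommRing B]

@[simp]
theorem mem_polynomialComposite {A : Subring B} {f : B[X]} :
    f ∈ polynomialComposite B A ↔ f.coeff 0 ∈ A :=
  Iff.rfl

noncomputable def polynomialComposite.C (A : Subring B) : A →+* polynomialComposite B A :=
  (Polynomial.C.comp A.subtype).codRestrict _ fun n => by simp

theorem polynomialComposite.eq_C_of_natDegree_eq_zero {A : Subring B}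
    {c : polynomialComposite B A} (hc : (c : B[X]).natDegree = 0) :
    c = polynomialComposite.C A ⟨(c : B[X]).coeff 0, c.2⟩ :=
  Subtype.ext (Polynomial.eq_C_of_natDegree_eq_zero hc)

def Subring.DvdNotUnitBy (A : Subring B) (b a : B) : Prop :=
  b ≠ 0 ∧ ∃ n : A, ¬IsUnit n ∧ a = b * n

theorem wfDvdMonoid_polynomialComposite [IsDomain B] (A : Subring B)
    (hA : WellFounded A.DvdNotUnitBy) : WfDvdMonoid (polynomialComposite B A) := by
  classical
  -- Order by degree, then by leading coefficient; `0` goes to `⊤`, as every `p ≠ 0` properly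
  -- divides it.
  refine ⟨RelHomClass.wellFounded (⟨fun p : polynomialComposite B A =>
      ((if p = 0 then ⊤ else ((p : B[X]).natDegree : WithTop ℕ)), (p : B[X]).leadingCoeff), ?_⟩ :
      DvdNotUnit →r Prod.Lex (· < ·) A.DvdNotUnitBy) (wellFounded_lt.prod_lex hA)⟩
  rintro p q ⟨hp, c, hc, rfl⟩
  rw [if_neg hp]
  split_ifs with hpc
  · exact Prod.Lex.left _ _ (WithTop.coe_lt_top _)
  have hp' : (p : B[X]) ≠ 0 := fun h => hp (Subtype.ext h)
  have hc' : (c : B[X]) ≠ 0 := fun h => hpc (by ext1; simp [h])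
  simp only [Subring.coe_mul, natDegree_mul hp' hc', leadingCoeff_mul]
  rcases Nat.eq_zero_or_pos (c : B[X]).natDegree with hdeg | hdeg
  · rw [hdeg, add_zero]
    refine Prod.Lex.right _ ⟨leadingCoeff_ne_zero.mpr hp', ⟨_, c.2⟩,
      fun hu => hc ?_, congrArg _ (congrArg (coeff _) hdeg)⟩
    rw [polynomialComposite.eq_C_of_natDegree_eq_zero hdeg]
    exact hu.map _
  · exact Prod.Lex.left _ _ (WithTop.coe_lt_coe.mpr (Nat.lt_add_of_pos_right hdeg))

-- Junk value `0` when the set is unbounded, e.g. for `a = 0`.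
noncomputable def maxNatDivisor (a : B) : ℕ :=
  sSup {n : ℕ | (n : B) ∣ a}

theorem natCast_maxNatDivisor_dvd {a : B} (h : BddAbove {n : ℕ | (n : B) ∣ a}) :
    (maxNatDivisor a : B) ∣ a :=
  Nat.sSup_mem ⟨1, by simp⟩ h

theorem le_maxNatDivisor {a : B} (h : BddAbove {n : ℕ | (n : B) ∣ a}) {n : ℕ}
    (hn : (n : B) ∣ a) : n ≤ maxNatDivisor a :=
  le_csSup h hn

theorem maxNatDivisor_lt_of_dvdNotUnitBy
    (hB : ∀ a : B, a ≠ 0 → BddAbove {n : ℕ | (n : B) ∣ a}) {a b : B} (ha : a ≠ 0)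
    (h : (Int.castRingHom B).range.DvdNotUnitBy b a) : maxNatDivisor b < maxNatDivisor a := by
  obtain ⟨hb, ⟨_, k, rfl⟩, hk, rfl⟩ := h
  have hk1 : k.natAbs ≠ 1 := by
    intro h1
    apply hk
    rcases Int.natAbs_eq_natAbs_iff.mp (h1.trans Int.natAbs_one.symm) with rfl | rfl
    · exact isUnit_one.map ((Int.castRingHom B).rangeRestrict)
    · exact isUnit_one.neg.map ((Int.castRingHom B).rangeRestrict)
  have hk0 : k.natAbs ≠ 0 := by
    intro h0
    simp [Int.natAbs_eq_zero.mp h0] at ha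
  have hdvd : ((maxNatDivisor b * k.natAbs : ℕ) : B) ∣ b * (k : B) := by
    rw [Nat.cast_mul]
    exact mul_dvd_mul (natCast_maxNatDivisor_dvd (hB b hb))
      (by simpa using Int.cast_dvd_cast (α := B) _ _ (Int.natAbs_dvd.mpr (dvd_refl k)))
  have hpos : 0 < maxNatDivisor b := le_maxNatDivisor (hB b hb) (n := 1) (by simp)
  calc maxNatDivisor b < maxNatDivisor b * k.natAbs := by
        apply lt_mul_right hpos; omega
    _ ≤ maxNatDivisor (b * (k : B)) := le_maxNatDivisor (hB _ ha) hdvd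

theorem wellFounded_dvdNotUnitBy_intCast_range
    (hB : ∀ a : B, a ≠ 0 → BddAbove {n : ℕ | (n : B) ∣ a}) :
    WellFounded (Int.castRingHom B).range.DvdNotUnitBy := by
  classical
  refine Subrelation.wf (r := InvImage (· < ·)
    fun a : B => if a = 0 then (⊤ : WithTop ℕ) else maxNatDivisor a) ?_
    (InvImage.wf _ wellFounded_lt)
  intro b a h
  simp only [InvImage, if_neg h.1]
  split_ifs with ha
  · exact WithTop.coe_lt_top _
  · exact WithTop.coe_lt_coe.mpr (maxNatDivisor_lt_of_dvdNotUnitBy hB ha h)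

end

theorem exists_span_singleton_eq_of_monotone {R : Type*} [CommRing R] [IsDomain R]
    [WfDvdMonoid R] (f : ℕ → R) (hf : ∀ k, Ideal.span {f k} ≤ Ideal.span {f (k + 1)}) :
    ∃ N, ∀ k, N ≤ k → Ideal.span {f k} = Ideal.span {f N} := by
  have : WellFoundedGT {I : Ideal R // I.IsPrincipal} :=
    ⟨Ideal.setOfPred_isPrincipal_wellFoundedOn_gt⟩
  obtain ⟨N, hN⟩ := WellFoundedGT.monotone_chain_condition
    ⟨fun k => (⟨Ideal.span {f k}, _, rfl⟩ : {I : Ideal R // I.IsPrincipal}),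
      monotone_nat_of_le_succ hf⟩
  exact ⟨N, fun k hk => congrArg Subtype.val (hN k hk).symm⟩

theorem natAbs_le_natAbs_norm_of_intCast_dvd {S : Type*} [CommRing S] [IsDomain S]
    [Module.Free ℤ S] [Module.Finite ℤ S] {a : S} (ha : a ≠ 0) {n : ℤ} (hn : (n : S) ∣ a) :
    n.natAbs ≤ (Algebra.norm ℤ a).natAbs := by
  obtain ⟨b, rfl⟩ := hn
  have hnorm : Algebra.norm ℤ ((n : S) * b) = n ^ Module.finrank ℤ S * Algebra.norm ℤ b := by
    rw [map_mul, ← eq_intCast (algebraMap ℤ S), Algebra.norm_algebraMap]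
  have hpos : 0 < Module.finrank ℤ S := Module.finrank_pos
  have hne : Algebra.norm ℤ ((n : S) * b) ≠ 0 := Algebra.norm_ne_zero_iff.mpr ha
  calc n.natAbs ≤ n.natAbs ^ Module.finrank ℤ S := Nat.le_self_pow hpos.ne' _
    _ ≤ (Algebra.norm ℤ ((n : S) * b)).natAbs :=
      Nat.le_of_dvd (Int.natAbs_pos.mpr hne)
        (by rw [hnorm, Int.natAbs_mul, Int.natAbs_pow]; exact dvd_mul_right _ _)

open IntermediateField NumberField in
theorem bddAbove_natCast_dvd_integralClosure {L : Type*} [Field L] [Algebra ℚ L]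
    {a : integralClosure ℤ L} (ha : a ≠ 0) :
    BddAbove {m : ℕ | (m : integralClosure ℤ L) ∣ a} := by
  set K := ℚ⟮(a : L)⟯
  have : FiniteDimensional ℚ K := adjoin.finiteDimensional a.2.tower_top
  -- `adjoin.finiteDimensional` speaks of the `ℚ`-algebra structure `K.algebra'`, which is not
  -- the one instance search picks for a field of characteristic zero.
  have : NumberField K := @NumberField.of_module_finite ℚ K _ _ _ K.algebra' this
  have hint : ∀ x : K, IsIntegral ℤ (x : L) → IsIntegral ℤ x := fun x hx =>
    (isIntegral_algebraMap_iff (algebraMap K L).injective).mp hx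
  let a' : 𝓞 K := ⟨AdjoinSimple.gen ℚ (a : L), hint _ a.2⟩
  have ha' : a' ≠ 0 := fun h => ha (Subtype.ext (congrArg (fun x : 𝓞 K => ((x : K) : L)) h))
  refine ⟨(Algebra.norm ℤ a').natAbs, ?_⟩
  rintro m ⟨b, hab⟩
  have hab' : (a : L) = m * b := congrArg Subtype.val hab
  have hm : (m : L) ≠ 0 := left_ne_zero_of_mul (hab' ▸ (Subtype.coe_ne_coe.mpr ha))
  have hbK : (b : L) ∈ K := by
    rw [← inv_mul_cancel_left₀ hm (b : L), ← hab']
    exact mul_mem (inv_mem (IntermediateField.natCast_mem _ m)) (mem_adjoin_simple_self ℚ _)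
  let b' : 𝓞 K := ⟨⟨b, hbK⟩, hint _ b.2⟩
  have hdvd : ((m : ℤ) : 𝓞 K) ∣ a' := ⟨b', by ext; push_cast; exact hab'⟩
  exact natAbs_le_natAbs_norm_of_intCast_dvd ha' hdvd

/-- Let `Z̄` denote the ring of all algebraic integers (the integral
closure of `ℤ` in an algebraic closure of `ℚ`) and let `R = ℤ + X ⬝ Z̄[X]` be the
subring of `Z̄[X]` of polynomials whose constant coefficient is a rational integer.
Then `R` satisfies the ascending chain condition on principal ideals (ACCP): every
ascending chain `(f 0) ⊆ (f 1) ⊆ (f 2) ⊆ ⋯` of principal ideals of `R` stabilizes. -/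
theorem intPlusXAlgIntX_accp (f : ℕ → intPlusXAlgIntX)
    (hf : ∀ k : ℕ, (Ideal.span {f k} : Ideal intPlusXAlgIntX)
      ≤ Ideal.span {f (k + 1)}) :
    ∃ N : ℕ, ∀ k : ℕ, N ≤ k →
      (Ideal.span {f k} : Ideal intPlusXAlgIntX) = Ideal.span {f N} := by
  have : WfDvdMonoid intPlusXAlgIntX :=
    wfDvdMonoid_polynomialComposite _ <|
      wellFounded_dvdNotUnitBy_intCast_range fun _ ha => bddAbove_natCast_dvd_integralClosure ha
  exact exists_span_singleton_eq_of_monotone f hf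
end
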